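/- arXiv:1301.0140 — 2 statements merged into one kernel-verified Lean document; each statement's English description precedes it below -/
import Mathlib

section
/- Let τ be a σ-maxitive measure on a measurable space (E, 𝔅). Then τ satisfies the Radon–Nikodym property with respect to the Sugeno integral if and only if τ is σ-principal. -/
open scoped ENNReal
open Set

/-- A σ-maxitive measure: vanishes on `∅` and turns countable unions of
measurable sets into suprema. -/
def SigmaMaxitive {E : Type*} [MeasurableSpace E] (ν : Set E → ℝ≥0∞) : Prop :=
  ν ∅ = 0 ∧ ∀ B : ℕ → Set E, (∀ n, MeasurableSet (B n)) →
    ν (⋃ n, B n) = ⨆ n, ν (B n)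

/-- A σ-ideal of the σ-algebra: a nonempty collection of measurable sets closed
under countable unions and under measurable subsets. -/
def IsSigmaIdeal {E : Type*} [MeasurableSpace E] (I : Set (Set E)) : Prop :=
  I.Nonempty ∧ (∀ A ∈ I, MeasurableSet A) ∧
    (∀ B : ℕ → Set E, (∀ n, B n ∈ I) → (⋃ n, B n) ∈ I) ∧
    (∀ A B : Set E, B ∈ I → A ⊆ B → MeasurableSet A → A ∈ I)

/-- `τ` is σ-principal. -/
def SigmaPrincipal {E : Type*} [MeasurableSpace E] (τ : Set E → ℝ≥0∞) : Prop :=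
  ∀ I : Set (Set E), IsSigmaIdeal I → ∃ L ∈ I, ∀ S ∈ I, τ (S \ L) = 0

/-- The Sugeno integral `⨆_{t ∈ (0,∞)} min(t, ν(B ∩ {f > t}))`. -/
noncomputable def sugenoInt {E : Type*} [MeasurableSpace E] (ν : Set E → ℝ≥0∞)
    (f : E → ℝ≥0∞) (B : Set E) : ℝ≥0∞ :=
  ⨆ t ∈ Ioo (0 : ℝ≥0∞) ⊤, min t (ν (B ∩ {x | t < f x}))

/-!
If `ν ≤ τ`, a density is built level by level: for each level `d` of a countable dense set,
σ-principality applied to the σ-ideal `{B | ν B ≤ d}` gives a set `L d` of `ν`-mass at most `d`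
containing every set of `ν`-mass at most `d` up to a `τ`-null set, and `c x` is the least `d`
with `x ∈ L d`.

Conversely, for a σ-ideal `I` the quotient `B ↦ ⨅ S ∈ I, τ (B \ S)` is σ-maxitive and below `τ`,
so it has a density `c`. Members of `I` have quotient mass `0`, hence are `τ`-null on `{c > 0}`;
the set `{c = 0}` also has quotient mass `0`, and since `I` is closed under countable unions this
infimum is attained at some `L ∈ I`, which is the required `L`.
-/

namespace SigmaMaxitive

variable {E : Type*} [MeasurableSpace E] {μ : Set E → ℝ≥0∞}

theorem iUnion {ι : Sort*} [Countable ι] (hμ : SigmaMaxitive μ) {B : ι → Set E}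
    (hB : ∀ i, MeasurableSet (B i)) : μ (⋃ i, B i) = ⨆ i, μ (B i) := by
  cases isEmpty_or_nonempty ι with
  | inl _ => simp [hμ.1]
  | inr _ =>
    obtain ⟨f, hf⟩ := exists_surjective_nat ι
    rw [← hf.iUnion_comp, ← hf.iSup_comp]
    exact hμ.2 _ fun n => hB (f n)

theorem union (hμ : SigmaMaxitive μ) {A B : Set E} (hA : MeasurableSet A)
    (hB : MeasurableSet B) : μ (A ∪ B) = max (μ A) (μ B) := by
  rw [union_eq_iUnion, hμ.iUnion (Bool.forall_bool.2 ⟨hB, hA⟩)]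
  exact (iSup_congr fun b => by cases b <;> rfl).trans (sup_eq_iSup (μ A) (μ B)).symm

theorem mono (hμ : SigmaMaxitive μ) {A B : Set E} (hA : MeasurableSet A) (hB : MeasurableSet B)
    (hAB : A ⊆ B) : μ A ≤ μ B := by
  simpa [union_eq_right.2 hAB] using (hμ.union hA hB).ge

end SigmaMaxitive

section Sugeno

variable {E : Type*} [MeasurableSpace E] {ν : Set E → ℝ≥0∞} {f : E → ℝ≥0∞} {B : Set E}

theorem sugenoInt_le {a : ℝ≥0∞} (h : ∀ t ∈ Ioo 0 ⊤, a < t → ν (B ∩ {x | t < f x}) ≤ a) :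
    sugenoInt ν f B ≤ a := by
  refine iSup₂_le fun t ht => ?_
  rcases le_or_gt t a with hta | hat
  · exact (min_le_left _ _).trans hta
  · exact (min_le_right _ _).trans (h t ht hat)

theorem measure_inter_le_sugenoInt {t : ℝ≥0∞} (ht : t ∈ Ioo 0 ⊤) (hlt : sugenoInt ν f B < t) :
    ν (B ∩ {x | t < f x}) ≤ sugenoInt ν f B := by
  have hmin : min t (ν (B ∩ {x | t < f x})) ≤ sugenoInt ν f B :=
    le_iSup₂ (f := fun s (_ : s ∈ Ioo 0 ⊤) => min s (ν (B ∩ {x | s < f x}))) t ht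
  exact (min_le_iff.1 hmin).resolve_left hlt.not_ge

theorem SigmaMaxitive.measure_inter_pos_eq_zero_of_sugenoInt_eq_zero {τ : Set E → ℝ≥0∞}
    (hτ : SigmaMaxitive τ) (hf : Measurable f) (hB : MeasurableSet B) (h : sugenoInt τ f B = 0) :
    τ (B ∩ {x | 0 < f x}) = 0 := by
  obtain ⟨D, hD, hdense, hD0, hDtop⟩ := ENNReal.exists_countable_dense_no_zero_top
  have : Countable D := hD.to_subtype
  have hcover : B ∩ {x | 0 < f x} = ⋃ d : D, B ∩ {x | (d : ℝ≥0∞) < f x} := by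
    ext x
    simp only [mem_inter_iff, mem_ofPred_eq, mem_iUnion, Subtype.exists, exists_prop]
    constructor
    · rintro ⟨hxB, hx⟩
      obtain ⟨d, hdD, hd0, hdx⟩ := hdense.exists_between hx
      exact ⟨d, hdD, hxB, hdx⟩
    · rintro ⟨d, -, hxB, hdx⟩
      exact ⟨hxB, zero_le.trans_lt hdx⟩
  rw [hcover, hτ.iUnion fun _ => hB.inter (measurableSet_lt measurable_const hf)]
  refine ENNReal.iSup_eq_zero.2 fun ⟨d, hd⟩ => nonpos_iff_eq_zero.1 ?_
  have hd_mem : d ∈ Ioo 0 ⊤ :=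
    ⟨pos_iff_ne_zero.2 fun h => hD0 (h ▸ hd), lt_top_iff_ne_top.2 fun h => hDtop (h ▸ hd)⟩
  have hlt : sugenoInt τ f B < d := h.symm ▸ hd_mem.1
  exact (measure_inter_le_sugenoInt hd_mem hlt).trans_eq h

end Sugeno

def HasSugenoDensity {E : Type*} [MeasurableSpace E] (τ ν : Set E → ℝ≥0∞) : Prop :=
  ∃ c : E → ℝ≥0∞, Measurable c ∧ ∀ B : Set E, MeasurableSet B → ν B = sugenoInt τ c B

section SigmaIdeal

variable {E : Type*} {τ : Set E → ℝ≥0∞} {I : Set (Set E)}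

noncomputable def quotientByIdeal (τ : Set E → ℝ≥0∞) (I : Set (Set E)) (B : Set E) : ℝ≥0∞ :=
  ⨅ S ∈ I, τ (B \ S)

theorem quotientByIdeal_eq_zero_of_mem (hτ : τ ∅ = 0) {S : Set E} (hS : S ∈ I) :
    quotientByIdeal τ I S = 0 :=
  nonpos_iff_eq_zero.1 <| (iInf₂_le S hS).trans_eq (by rw [sdiff_self, hτ])

variable [MeasurableSpace E]

theorem IsSigmaIdeal.empty_mem (hI : IsSigmaIdeal I) : ∅ ∈ I := by
  obtain ⟨⟨S, hS⟩, -, -, hsub⟩ := hI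
  exact hsub ∅ S hS (empty_subset S) MeasurableSet.empty

theorem SigmaMaxitive.isSigmaIdeal_setOf_le {ν : Set E → ℝ≥0∞} (hν : SigmaMaxitive ν)
    (a : ℝ≥0∞) : IsSigmaIdeal {B | MeasurableSet B ∧ ν B ≤ a} := by
  refine ⟨⟨∅, MeasurableSet.empty, by simp [hν.1]⟩, fun _ hA => hA.1, fun B hB => ?_,
    fun A B hB hAB hA => ⟨hA, (hν.mono hA hB.1 hAB).trans hB.2⟩⟩
  refine ⟨MeasurableSet.iUnion fun n => (hB n).1, ?_⟩
  rw [hν.2 _ fun n => (hB n).1]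
  exact iSup_le fun n => (hB n).2

theorem quotientByIdeal_le (hI : IsSigmaIdeal I) (B : Set E) : quotientByIdeal τ I B ≤ τ B :=
  (iInf₂_le (∅ : Set E) hI.empty_mem).trans_eq (congrArg τ (sdiff_empty (s := B)))

theorem SigmaMaxitive.exists_mem_diff_eq_quotientByIdeal (hτ : SigmaMaxitive τ)
    (hI : IsSigmaIdeal I) {B : Set E} (hB : MeasurableSet B) :
    ∃ L ∈ I, τ (B \ L) = quotientByIdeal τ I B := by
  obtain ⟨hne, hmeas, hiUnion, -⟩ := hI
  obtain ⟨u, -, hu, huS⟩ :=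
    exists_seq_tendsto_sInf (hne.image fun S => τ (B \ S)) (OrderBot.bddBelow _)
  choose S hSI hSu using huS
  refine ⟨⋃ n, S n, hiUnion S hSI, le_antisymm ?_ (iInf₂_le _ (hiUnion S hSI))⟩
  rw [quotientByIdeal, ← sInf_image]
  refine ge_of_tendsto' hu fun n => hSu n ▸ hτ.mono (hB.diff (hmeas _ (hiUnion S hSI)))
    (hB.diff (hmeas _ (hSI n))) (sdiff_subset_sdiff_right (subset_iUnion S n))

theorem sigmaMaxitive_quotientByIdeal (hτ : SigmaMaxitive τ) (hI : IsSigmaIdeal I) :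
    SigmaMaxitive (quotientByIdeal τ I) := by
  refine ⟨quotientByIdeal_eq_zero_of_mem hτ.1 hI.empty_mem, fun B hB => le_antisymm ?_ ?_⟩
  · choose L hLI hL using fun n => hτ.exists_mem_diff_eq_quotientByIdeal hI (hB n)
    have hLm : MeasurableSet (⋃ n, L n) := hI.2.1 _ (hI.2.2.1 L hLI)
    calc _ ≤ τ ((⋃ n, B n) \ ⋃ n, L n) := iInf₂_le _ (hI.2.2.1 L hLI)
      _ = ⨆ n, τ (B n \ ⋃ m, L m) := by rw [iUnion_sdiff, hτ.2 _ fun n => (hB n).diff hLm]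
      _ ≤ ⨆ n, τ (B n \ L n) := iSup_mono fun n => hτ.mono ((hB n).diff hLm)
          ((hB n).diff (hI.2.1 _ (hLI n))) (sdiff_subset_sdiff_right (subset_iUnion L n))
      _ = _ := by simp only [hL]
  · refine iSup_le fun n => le_iInf₂ fun S hS => (iInf₂_le S hS).trans ?_
    exact hτ.mono ((hB n).diff (hI.2.1 S hS)) ((MeasurableSet.iUnion hB).diff (hI.2.1 S hS))
      (sdiff_subset_sdiff_left (subset_iUnion B n))

theorem SigmaMaxitive.exists_null_diff_of_hasSugenoDensity_quotientByIdeal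
    (hτ : SigmaMaxitive τ) (hI : IsSigmaIdeal I)
    (h : HasSugenoDensity τ (quotientByIdeal τ I)) : ∃ L ∈ I, ∀ S ∈ I, τ (S \ L) = 0 := by
  obtain ⟨c, hc, hνc⟩ := h
  have hZ : MeasurableSet {x | c x = 0} := hc (measurableSet_singleton 0)
  have hZ0 : quotientByIdeal τ I {x | c x = 0} = 0 := by
    refine (hνc _ hZ).trans (nonpos_iff_eq_zero.1 (sugenoInt_le fun t _ ht => ?_))
    have hempty : {x | c x = 0} ∩ {x | t < c x} = ∅ := by
      ext x
      simp only [mem_inter_iff, mem_ofPred_eq, mem_empty_iff_false, iff_false, not_and]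
      exact fun hx => hx ▸ ht.not_gt
    simp [hempty, hτ.1]
  obtain ⟨L, hLI, hL⟩ := hτ.exists_mem_diff_eq_quotientByIdeal hI hZ
  refine ⟨L, hLI, fun S hS => ?_⟩
  have hSm := hI.2.1 S hS
  have hLm := hI.2.1 L hLI
  have hpos : MeasurableSet (S ∩ {x | 0 < c x}) := hSm.inter (measurableSet_lt measurable_const hc)
  have hpos0 : τ (S ∩ {x | 0 < c x}) = 0 := hτ.measure_inter_pos_eq_zero_of_sugenoInt_eq_zero hc
    hSm ((hνc S hSm).symm.trans (quotientByIdeal_eq_zero_of_mem hτ.1 hS))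
  have hcover : S \ L ⊆ (S ∩ {x | 0 < c x}) ∪ ({x | c x = 0} \ L) := by
    rintro x ⟨hxS, hxL⟩
    rcases eq_zero_or_pos (c x) with h0 | h0
    · exact Or.inr ⟨h0, hxL⟩
    · exact Or.inl ⟨hxS, h0⟩
  refine nonpos_iff_eq_zero.1 ((hτ.mono (hSm.diff hLm) (hpos.union (hZ.diff hLm)) hcover).trans ?_)
  rw [hτ.union hpos (hZ.diff hLm), hpos0, hL, hZ0, max_self]

end SigmaIdeal

section LevelDensity

variable {E : Type*} {D : Set ℝ≥0∞} (L : D → Set E)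

open Classical in
noncomputable def levelDensity (x : E) : ℝ≥0∞ :=
  ⨅ d : D, if x ∈ L d then (d : ℝ≥0∞) else ⊤

variable {L}

theorem levelDensity_le {x : E} {d : D} (hx : x ∈ L d) : levelDensity L x ≤ d :=
  iInf_le_of_le d (by rw [if_pos hx])

theorem exists_mem_of_levelDensity_lt {x : E} {r : ℝ≥0∞} (h : levelDensity L x < r) :
    ∃ d : D, x ∈ L d ∧ (d : ℝ≥0∞) < r := by
  obtain ⟨d, hd⟩ := iInf_lt_iff.1 h
  by_cases hx : x ∈ L d
  · exact ⟨d, hx, by rwa [if_pos hx] at hd⟩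
  · exact absurd hd (by simp [hx])

variable [MeasurableSpace E] [Countable D] (hL : ∀ d, MeasurableSet (L d))
include hL

theorem measurable_levelDensity : Measurable (levelDensity L) :=
  Measurable.iInf fun d => Measurable.ite (hL d) measurable_const measurable_const

theorem SigmaMaxitive.measure_levelDensity_lt_le {ν : Set E → ℝ≥0∞} (hν : SigmaMaxitive ν)
    (hLν : ∀ d, ν (L d) ≤ d) (r : ℝ≥0∞) : ν {x | levelDensity L x < r} ≤ r := by
  have hcover : {x | levelDensity L x < r} ⊆ ⋃ d : {d : D // (d : ℝ≥0∞) < r}, L d := by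
    intro x hx
    obtain ⟨d, hxd, hdr⟩ := exists_mem_of_levelDensity_lt hx
    exact mem_iUnion.2 ⟨⟨d, hdr⟩, hxd⟩
  calc ν {x | levelDensity L x < r}
      ≤ ν (⋃ d : {d : D // (d : ℝ≥0∞) < r}, L d) :=
        hν.mono (measurableSet_lt (measurable_levelDensity hL) measurable_const)
          (MeasurableSet.iUnion fun d => hL d) hcover
    _ = ⨆ d : {d : D // (d : ℝ≥0∞) < r}, ν (L d) := hν.iUnion fun d => hL d
    _ ≤ r := iSup_le fun d => (hLν d).trans d.2.le

variable {τ ν : Set E → ℝ≥0∞} {B : Set E}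

theorem SigmaMaxitive.le_sugenoInt_levelDensity (hν : SigmaMaxitive ν)
    (hle : ∀ B, MeasurableSet B → ν B ≤ τ B) (hLν : ∀ d, ν (L d) ≤ d) (hB : MeasurableSet B) :
    ν B ≤ sugenoInt τ (levelDensity L) B := by
  set s := sugenoInt τ (levelDensity L) B
  have hc := measurable_levelDensity hL
  refine le_of_forall_gt_imp_ge_of_dense fun r hr => ?_
  obtain ⟨t, hst, htr⟩ := exists_between hr
  have ht : t ∈ Ioo 0 ⊤ := ⟨zero_le.trans_lt hst, htr.trans_le le_top⟩
  have hupper : MeasurableSet (B ∩ {x | t < levelDensity L x}) :=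
    hB.inter (measurableSet_lt measurable_const hc)
  have hlower : MeasurableSet {x | levelDensity L x < r} := measurableSet_lt hc measurable_const
  have hcover : B ⊆ (B ∩ {x | t < levelDensity L x}) ∪ {x | levelDensity L x < r} := by
    intro x hx
    rcases lt_or_ge t (levelDensity L x) with h | h
    · exact Or.inl ⟨hx, h⟩
    · exact Or.inr (h.trans_lt htr)
  calc ν B ≤ max (ν (B ∩ {x | t < levelDensity L x})) (ν {x | levelDensity L x < r}) :=
        (hν.mono hB (hupper.union hlower) hcover).trans_eq (hν.union hupper hlower)
    _ ≤ max s r :=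
        max_le_max ((hle _ hupper).trans (measure_inter_le_sugenoInt ht hst))
          (hν.measure_levelDensity_lt_le hL hLν r)
    _ = r := max_eq_right hr.le

theorem SigmaMaxitive.sugenoInt_levelDensity_le (hτ : SigmaMaxitive τ) (hD : Dense D)
    (hLτ : ∀ d : D, ∀ S, MeasurableSet S → ν S ≤ d → τ (S \ L d) = 0) (hB : MeasurableSet B) :
    sugenoInt τ (levelDensity L) B ≤ ν B := by
  refine sugenoInt_le fun t _ ht => ?_
  obtain ⟨d, hdD, hBd, hdt⟩ := hD.exists_between ht
  have hsub : B ∩ {x | t < levelDensity L x} ⊆ B \ L ⟨d, hdD⟩ := fun x ⟨hxB, hxt⟩ =>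
    ⟨hxB, fun hxL => (levelDensity_le hxL).not_gt (hdt.trans hxt)⟩
  calc τ (B ∩ {x | t < levelDensity L x}) ≤ τ (B \ L ⟨d, hdD⟩) :=
        hτ.mono (hB.inter (measurableSet_lt measurable_const (measurable_levelDensity hL)))
          (hB.diff (hL _)) hsub
    _ = 0 := hLτ ⟨d, hdD⟩ B hB hBd.le
    _ ≤ ν B := zero_le

end LevelDensity

theorem SigmaMaxitive.hasSugenoDensity_of_sigmaPrincipal {E : Type*} [MeasurableSpace E]
    {τ ν : Set E → ℝ≥0∞} (hτ : SigmaMaxitive τ) (hp : SigmaPrincipal τ) (hν : SigmaMaxitive ν)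
    (hle : ∀ B, MeasurableSet B → ν B ≤ τ B) : HasSugenoDensity τ ν := by
  obtain ⟨D, hD, hdense⟩ := TopologicalSpace.exists_countable_dense ℝ≥0∞
  have : Countable D := hD.to_subtype
  choose L hL hLτ using fun d : D => hp _ (hν.isSigmaIdeal_setOf_le d)
  have hLm : ∀ d, MeasurableSet (L d) := fun d => (hL d).1
  refine ⟨levelDensity L, measurable_levelDensity hLm, fun B hB => le_antisymm
    (hν.le_sugenoInt_levelDensity hLm hle (fun d => (hL d).2) hB)
    (hτ.sugenoInt_levelDensity_le hLm hdense (fun d S hS hSd => hLτ d S ⟨hS, hSd⟩) hB)⟩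

/-- A σ-maxitive measure has the Radon–Nikodym property w.r.t. the Sugeno
integral iff it is σ-principal. -/
theorem sugeno_rnp_iff_sigmaPrincipal
    {E : Type*} [MeasurableSpace E] (τ : Set E → ℝ≥0∞) (hτ : SigmaMaxitive τ) :
    (∀ ν : Set E → ℝ≥0∞, SigmaMaxitive ν →
        (∀ B : Set E, MeasurableSet B → ν B ≤ τ B) →
        ∃ c : E → ℝ≥0∞, Measurable c ∧
          ∀ B : Set E, MeasurableSet B → ν B = sugenoInt τ c B) ↔
      SigmaPrincipal τ := by
  constructor
  · intro hRNP I hI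
    exact hτ.exists_null_diff_of_hasSugenoDensity_quotientByIdeal hI
      (hRNP _ (sigmaMaxitive_quotientByIdeal hτ hI) fun B _ => quotientByIdeal_le hI B)
  · exact fun hp ν hν hle => hτ.hasSugenoDensity_of_sigmaPrincipal hp hν hle
end

section
/- Let ⊙ be a pseudo-multiplication on [0,∞] and suppose that the set F⊙ of ⊙-finite elements equals [0, φ) for some φ ∈ (1⊙, ∞]. Then ⨅_{s>0} s ⊙ φ = φ, and t ⊙ φ = φ ⊙ t = φ for all t with 0 < t ≤ φ; in particular φ ⊙ φ = φ. -/
open scoped ENNReal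
open Set

/-- A pseudo-multiplication on `[0,∞]`: associative, monotone in each argument,
continuous on `(0,∞) × [0,∞]`, with `s ↦ s ⊙ t` continuous on `(0,∞]`,
admitting a left identity, without zero divisors, and with `0` as annihilator. -/
structure PseudoMul where
  op : ℝ≥0∞ → ℝ≥0∞ → ℝ≥0∞
  assoc : ∀ a b c, op (op a b) c = op a (op b c)
  mono_left : ∀ t, Monotone fun s => op s t
  mono_right : ∀ s, Monotone fun t => op s t
  continuousOn : ContinuousOn (fun p : ℝ≥0∞ × ℝ≥0∞ => op p.1 p.2) (Ioo 0 ⊤ ×ˢ univ)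
  continuousOn_left : ∀ t, ContinuousOn (fun s => op s t) (Ioi 0)
  one : ℝ≥0∞
  one_op : ∀ t, op one t = t
  no_zero_divisors : ∀ s t, op s t = 0 → s = 0 ∨ t = 0
  zero_op : ∀ t, op 0 t = 0
  op_zero : ∀ t, op t 0 = 0

/-- An element `t` is `⊙`-finite if `⨅_{s>0} s ⊙ t = 0`. -/
def PseudoMul.OFinite (P : PseudoMul) (t : ℝ≥0∞) : Prop :=
  ⨅ s ∈ Ioi (0 : ℝ≥0∞), P.op s t = 0

/-- `⊙` is non-degenerate if its left identity is `⊙`-finite. -/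
def PseudoMul.Nondegenerate (P : PseudoMul) : Prop :=
  P.OFinite P.one

/-!
Write `I v = ⨅_{s>0} s ⊙ v` (`PseudoMul.leftInf`). Continuity of `t ⊙ ·` for `0 < t < ∞` lets
it pass through the infimum, and `t ⊙ s → 0` as `s → 0`, so `t ⊙ I v = I v`; with monotonicity
this gives `I (I v) = I v`. A nonzero fixed point of `I` is never `⊙`-finite, hence lies above `φ`.
Applied to `I φ` this forces `I φ = φ`, i.e. `φ ≤ s ⊙ φ` for all `s > 0`, and
`t ⊙ φ = t ⊙ I φ = I φ = φ`. For `φ ⊙ t`, associativity makes `φ ⊙ t` a fixed point of `I`, so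
`φ ≤ φ ⊙ t ≤ φ ⊙ φ = φ` (here `φ > 0` because `0` is `⊙`-finite).
-/

namespace PseudoMul

variable (P : PseudoMul)

noncomputable def leftInf (v : ℝ≥0∞) : ℝ≥0∞ :=
  ⨅ s ∈ Ioi (0 : ℝ≥0∞), P.op s v

lemma one_pos : 0 < P.one := by
  refine pos_iff_ne_zero.mpr fun h => ?_
  have h1 := P.one_op 1
  rw [h, P.zero_op] at h1
  exact zero_ne_one h1

lemma op_pos {s t : ℝ≥0∞} (hs : 0 < s) (ht : 0 < t) : 0 < P.op s t :=
  pos_iff_ne_zero.mpr fun h => (P.no_zero_divisors s t h).elim hs.ne' ht.ne'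

lemma continuousAt_op_right {t : ℝ≥0∞} (ht0 : 0 < t) (ht : t ≠ ⊤) (v : ℝ≥0∞) :
    ContinuousAt (P.op t) v := by
  have hmem : Ioo 0 ⊤ ×ˢ univ ∈ nhds (t, v) :=
    (isOpen_Ioo.prod isOpen_univ).mem_nhds ⟨⟨ht0, ht.lt_top⟩, mem_univ v⟩
  exact (P.continuousOn.continuousAt hmem).comp (continuous_const.prodMk continuous_id).continuousAt

lemma op_biInf_Ioi {t : ℝ≥0∞} (ht0 : 0 < t) (ht : t ≠ ⊤) (f : ℝ≥0∞ → ℝ≥0∞) :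
    P.op t (⨅ s ∈ Ioi 0, f s) = ⨅ s ∈ Ioi 0, P.op t (f s) := by
  have : Nonempty (Ioi (0 : ℝ≥0∞)) := ⟨⟨1, mem_Ioi.mpr zero_lt_one⟩⟩
  rw [iInf_subtype', iInf_subtype']
  exact (P.mono_right t).map_ciInf_of_continuousAt (P.continuousAt_op_right ht0 ht _)

lemma exists_op_lt {t u : ℝ≥0∞} (ht0 : 0 < t) (ht : t ≠ ⊤) (hu : 0 < u) :
    ∃ s, 0 < s ∧ P.op t s < u := by
  have hinf : ⨅ s ∈ Ioi (0 : ℝ≥0∞), P.op t s = 0 := by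
    have h := P.op_biInf_Ioi ht0 ht id
    simp only [id, mem_Ioi, ENNReal.iInf_gt_eq_self, P.op_zero] at h
    exact h.symm
  have hlt : ⨅ s ∈ Ioi (0 : ℝ≥0∞), P.op t s < u := hinf.symm ▸ hu
  obtain ⟨s, hs⟩ := iInf_lt_iff.mp hlt
  obtain ⟨hs0, hts⟩ := iInf_lt_iff.mp hs
  exact ⟨s, hs0, hts⟩

lemma leftInf_le_op {s : ℝ≥0∞} (hs : 0 < s) (v : ℝ≥0∞) : P.leftInf v ≤ P.op s v :=
  iInf₂_le s hs

lemma leftInf_le (v : ℝ≥0∞) : P.leftInf v ≤ v :=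
  (P.leftInf_le_op P.one_pos v).trans_eq (P.one_op v)

lemma op_leftInf_of_ne_top {t : ℝ≥0∞} (ht0 : 0 < t) (ht : t ≠ ⊤) (v : ℝ≥0∞) :
    P.op t (P.leftInf v) = P.leftInf v := by
  refine le_antisymm (le_iInf₂ fun u hu => ?_) ?_
  · obtain ⟨s, hs, hts⟩ := P.exists_op_lt ht0 ht hu
    calc P.op t (P.leftInf v) ≤ P.op t (P.op s v) := P.mono_right t (P.leftInf_le_op hs v)
      _ = P.op (P.op t s) v := (P.assoc t s v).symm
      _ ≤ P.op u v := P.mono_left v hts.le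
  · rw [leftInf, P.op_biInf_Ioi ht0 ht]
    refine le_iInf₂ fun s hs => ?_
    rw [← P.assoc]
    exact P.leftInf_le_op (P.op_pos ht0 hs) v

lemma leftInf_le_op_leftInf {t : ℝ≥0∞} (ht : 0 < t) (v : ℝ≥0∞) :
    P.leftInf v ≤ P.op t (P.leftInf v) := by
  rcases eq_or_ne t ⊤ with rfl | ht_top
  · exact (P.one_op _).symm.le.trans (P.mono_left _ le_top)
  · exact (P.op_leftInf_of_ne_top ht ht_top v).ge

lemma leftInf_eq_self_of_le_op {w : ℝ≥0∞} (h : ∀ s, 0 < s → w ≤ P.op s w) :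
    P.leftInf w = w :=
  (P.leftInf_le w).antisymm (le_iInf₂ h)

lemma leftInf_leftInf (v : ℝ≥0∞) : P.leftInf (P.leftInf v) = P.leftInf v :=
  P.leftInf_eq_self_of_le_op fun _ hs => P.leftInf_le_op_leftInf hs v

lemma not_oFinite_of_leftInf_eq_self {w : ℝ≥0∞} (hw : w ≠ 0) (h : P.leftInf w = w) :
    ¬ P.OFinite w :=
  fun hfin => hw (h.symm.trans hfin)

end PseudoMul

theorem phi_absorbing_general (P : PseudoMul) (φ : ℝ≥0∞)
    (hF : {t : ℝ≥0∞ | P.OFinite t} = Iio φ) :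
    (⨅ s ∈ Ioi (0 : ℝ≥0∞), P.op s φ) = φ ∧
      (∀ t : ℝ≥0∞, 0 < t → t ≤ φ → P.op t φ = φ ∧ P.op φ t = φ) ∧
      P.op φ φ = φ := by
  have hF' (w : ℝ≥0∞) : P.OFinite w ↔ w < φ := Set.ext_iff.mp hF w
  have le_of_fixed {w : ℝ≥0∞} (hw : w ≠ 0) (h : P.leftInf w = w) : φ ≤ w :=
    not_lt.mp fun hlt => P.not_oFinite_of_leftInf_eq_self hw h ((hF' w).mpr hlt)
  have hφ0 : 0 < φ := (hF' 0).mp (le_zero_iff.mp (P.leftInf_le 0))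
  have hIφ : P.leftInf φ = φ := by
    have hne : P.leftInf φ ≠ 0 := fun h => lt_irrefl φ ((hF' φ).mp h)
    exact (P.leftInf_le φ).antisymm (le_of_fixed hne (P.leftInf_leftInf φ))
  have le_op (s : ℝ≥0∞) (hs : 0 < s) : φ ≤ P.op s φ := hIφ.symm.le.trans (P.leftInf_le_op hs φ)
  have op_phi (t : ℝ≥0∞) (ht : 0 < t) (htφ : t ≤ φ) : P.op t φ = φ := by
    rcases eq_or_ne φ ⊤ with rfl | hφ
    · exact top_le_iff.mp (le_op t ht)
    · rw [← hIφ]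
      exact P.op_leftInf_of_ne_top ht (ne_top_of_le_ne_top hφ htφ) φ
  have phi_op (t : ℝ≥0∞) (ht : 0 < t) (htφ : t ≤ φ) : P.op φ t = φ := by
    refine le_antisymm ((P.mono_right φ htφ).trans (op_phi φ hφ0 le_rfl).le) ?_
    refine le_of_fixed (P.op_pos hφ0 ht).ne' (P.leftInf_eq_self_of_le_op fun s hs => ?_)
    rw [← P.assoc]
    exact P.mono_left t (le_op s hs)
  exact ⟨hIφ, fun t ht htφ => ⟨op_phi t ht htφ, phi_op t ht htφ⟩, op_phi φ hφ0 le_rfl⟩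

/-- If the set of `⊙`-finite elements equals `[0, φ)` with `φ > 1⊙`, then
`⨅_{s>0} s ⊙ φ = φ` and `t ⊙ φ = φ ⊙ t = φ` for all `0 < t ≤ φ`; in
particular `φ` is idempotent. -/
theorem phi_absorbing (P : PseudoMul) (φ : ℝ≥0∞) (hφ : P.one < φ)
    (hF : {t : ℝ≥0∞ | P.OFinite t} = Iio φ) :
    (⨅ s ∈ Ioi (0 : ℝ≥0∞), P.op s φ) = φ ∧
      (∀ t : ℝ≥0∞, 0 < t → t ≤ φ → P.op t φ = φ ∧ P.op φ t = φ) ∧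
      P.op φ φ = φ :=
  phi_absorbing_general P φ hF
end
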